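/- Let q₁, q₂, q₃ ∈ S² ⊂ ℝ³ be pairwise distinct points with ⟪q_i, q_j⟫ ≥ 0 for all i ≠ j, and let v₁, v₂, v₃ ∈ ℝ³ be arbitrary. Then (1/2)·∑_{i=1}^{3} ‖v_i‖² + ∑_{1 ≤ i < j ≤ 3} cot(d(q_i,q_j)) ≥ (1/3)·∑_{1 ≤ i < j ≤ 3} [ (1/2)·‖v_i − v_j‖² + 3/‖q_i − q_j‖ ] − 3. -/

import Mathlib

open Real RealInnerProductSpace

/-!
Let `r = ‖qᵢ - qⱼ‖` and `t = ⟪qᵢ, qⱼ⟫ ∈ [0, 1]`, so `r² = 2 - 2t` and `d = arccos t`. The sine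
`√(1 - t²)` of `d` is at most the chord `r`, hence `cot d ≥ t / r = 1 / r - r / 2 ≥ 1 / r - 1`
because `r ≤ 2`. The kinetic terms are compared through
`∑_{i<j} ‖vᵢ - vⱼ‖² + ‖∑ vᵢ‖² = 3 ∑ ‖vᵢ‖²`.
-/

-- The junk values of `arccos`, `√` and division make this hold for every real `x`.
theorem Real.cot_arccos (x : ℝ) : cot (arccos x) = x / √(1 - x ^ 2) := by
  rw [cot_eq_cos_div_sin, sin_arccos]
  by_cases hx : -1 ≤ x ∧ x ≤ 1
  · rw [cos_arccos hx.1 hx.2]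
  · have : 1 - x ^ 2 ≤ 0 := by
      rw [not_and_or, not_le, not_le] at hx
      rcases hx with hx | hx <;> nlinarith
    rw [sqrt_eq_zero_of_nonpos this, div_zero, div_zero]

section InnerProductSpace

variable {E : Type*} [NormedAddCommGroup E] [InnerProductSpace ℝ E]

theorem norm_sub_sq_eq_two_sub_two_mul_inner {p q : E} (hp : ‖p‖ = 1) (hq : ‖q‖ = 1) :
    ‖p - q‖ ^ 2 = 2 - 2 * ⟪p, q⟫ := by
  rw [norm_sub_sq_real, hp, hq]; ring

theorem one_div_norm_sub_sub_one_le_cot_arccos_inner {p q : E} (hp : ‖p‖ = 1) (hq : ‖q‖ = 1)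
    (hpq : 0 ≤ ⟪p, q⟫) : 1 / ‖p - q‖ - 1 ≤ cot (arccos ⟪p, q⟫) := by
  have hchord := norm_sub_sq_eq_two_sub_two_mul_inner hp hq
  have hr0 := norm_nonneg (p - q)
  have hr2 : ‖p - q‖ ≤ 2 := (norm_sub_le p q).trans_eq (by rw [hp, hq]; norm_num)
  rw [cot_arccos]
  generalize ‖p - q‖ = r at hchord hr0 hr2 ⊢
  generalize ⟪p, q⟫ = t at hpq hchord ⊢
  rcases hr0.eq_or_lt with hr | hr
  · subst hr
    have ht : t = 1 := by linarith
    simp [ht]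
  have ht : t < 1 := by nlinarith
  have hsin : √(1 - t ^ 2) ≤ r := (sqrt_le_left hr.le).2 (by nlinarith)
  calc 1 / r - 1 ≤ 1 / r - r / 2 := by linarith
    _ = t / r := by field_simp; linarith
    _ ≤ t / √(1 - t ^ 2) := div_le_div_of_nonneg_left hpq (sqrt_pos.2 (by nlinarith)) hsin

theorem norm_sub_sq_add_norm_sub_sq_add_norm_sub_sq_add_norm_add_add_sq (v₁ v₂ v₃ : E) :
    ‖v₁ - v₂‖ ^ 2 + ‖v₁ - v₃‖ ^ 2 + ‖v₂ - v₃‖ ^ 2 + ‖v₁ + v₂ + v₃‖ ^ 2 =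
      3 * (‖v₁‖ ^ 2 + ‖v₂‖ ^ 2 + ‖v₃‖ ^ 2) := by
  simp only [norm_sub_sq_real, norm_add_sq_real, inner_add_left]
  ring

end InnerProductSpace

theorem pointwise_action_estimate_general (q₁ q₂ q₃ v₁ v₂ v₃ : EuclideanSpace ℝ (Fin 3))
    (hq₁ : ‖q₁‖ = 1) (hq₂ : ‖q₂‖ = 1) (hq₃ : ‖q₃‖ = 1)
    (hi12 : 0 ≤ ⟪q₁, q₂⟫) (hi13 : 0 ≤ ⟪q₁, q₃⟫) (hi23 : 0 ≤ ⟪q₂, q₃⟫) :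
    (1 / 2 : ℝ) * (‖v₁‖ ^ 2 + ‖v₂‖ ^ 2 + ‖v₃‖ ^ 2) +
        (Real.cot (Real.arccos ⟪q₁, q₂⟫) + Real.cot (Real.arccos ⟪q₁, q₃⟫) +
          Real.cot (Real.arccos ⟪q₂, q₃⟫)) ≥
      (1 / 3 : ℝ) *
          (((1 / 2 : ℝ) * ‖v₁ - v₂‖ ^ 2 + 3 / ‖q₁ - q₂‖) +
            ((1 / 2 : ℝ) * ‖v₁ - v₃‖ ^ 2 + 3 / ‖q₁ - q₃‖) +
            ((1 / 2 : ℝ) * ‖v₂ - v₃‖ ^ 2 + 3 / ‖q₂ - q₃‖)) - 3 := by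
  have h12 := one_div_norm_sub_sub_one_le_cot_arccos_inner hq₁ hq₂ hi12
  have h13 := one_div_norm_sub_sub_one_le_cot_arccos_inner hq₁ hq₃ hi13
  have h23 := one_div_norm_sub_sub_one_le_cot_arccos_inner hq₂ hq₃ hi23
  have hkin := norm_sub_sq_add_norm_sub_sq_add_norm_sub_sq_add_norm_add_add_sq v₁ v₂ v₃
  have hsum := sq_nonneg ‖v₁ + v₂ + v₃‖
  linear_combination h12 + h13 + h23 + hkin / 6 + hsum / 6

/-- Pointwise estimate underlying the action lower bound for binary-collision
solutions of the three-body problem on `S²` with unit masses: for pairwise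
distinct `q₁, q₂, q₃ ∈ S²` with `⟪qᵢ, qⱼ⟫ ≥ 0` for `i ≠ j` and arbitrary
`v₁, v₂, v₃ ∈ ℝ³`,
`(1/2) ∑ ‖vᵢ‖² + ∑_{i<j} cot (d(qᵢ,qⱼ))
  ≥ (1/3) ∑_{i<j} [(1/2) ‖vᵢ - vⱼ‖² + 3/‖qᵢ - qⱼ‖] - 3`. -/
theorem pointwise_action_estimate (q₁ q₂ q₃ v₁ v₂ v₃ : EuclideanSpace ℝ (Fin 3))
    (hq₁ : ‖q₁‖ = 1) (hq₂ : ‖q₂‖ = 1) (hq₃ : ‖q₃‖ = 1)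
    (h12 : q₁ ≠ q₂) (h13 : q₁ ≠ q₃) (h23 : q₂ ≠ q₃)
    (hi12 : 0 ≤ ⟪q₁, q₂⟫) (hi13 : 0 ≤ ⟪q₁, q₃⟫) (hi23 : 0 ≤ ⟪q₂, q₃⟫) :
    (1 / 2 : ℝ) * (‖v₁‖ ^ 2 + ‖v₂‖ ^ 2 + ‖v₃‖ ^ 2) +
        (Real.cot (Real.arccos ⟪q₁, q₂⟫) + Real.cot (Real.arccos ⟪q₁, q₃⟫) +
          Real.cot (Real.arccos ⟪q₂, q₃⟫)) ≥
      (1 / 3 : ℝ) *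
          (((1 / 2 : ℝ) * ‖v₁ - v₂‖ ^ 2 + 3 / ‖q₁ - q₂‖) +
            ((1 / 2 : ℝ) * ‖v₁ - v₃‖ ^ 2 + 3 / ‖q₁ - q₃‖) +
            ((1 / 2 : ℝ) * ‖v₂ - v₃‖ ^ 2 + 3 / ‖q₂ - q₃‖)) - 3 :=
  pointwise_action_estimate_general q₁ q₂ q₃ v₁ v₂ v₃ hq₁ hq₂ hq₃ hi12 hi13 hi23
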